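/- Let K_{α,β}(x) = |x|^{-α} log^{β}(1+|x|) with 0 ≤ α ≤ N, β > α − N, and let f ≥ 0 satisfy f(x) ≥ c|x|^{-σ} log^{κ}(1+|x|) for |x| ≥ 1, with σ > N − α. Then there exists C > 0 such that (K_{α,β} * f)(x) ≥ C|x|^{N−α−σ} log^{β+κ}(1+|x|) for all |x| ≥ 1. -/

import Mathlib

open MeasureTheory Real
open scoped ENNReal

noncomputable def lap {N : ℕ} (f : EuclideanSpace ℝ (Fin N) → ℝ) (x : EuclideanSpace ℝ (Fin N)) : ℝ :=
  ∑ i, iteratedFDeriv ℝ 2 f x ![EuclideanSpace.single i 1, EuclideanSpace.single i 1]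

noncomputable def Kab {N : ℕ} (α β : ℝ) (x : EuclideanSpace ℝ (Fin N)) : ℝ :=
  ‖x‖ ^ (-α) * (Real.log (1 + ‖x‖)) ^ β

noncomputable def convK {N : ℕ} (α β : ℝ) (f : EuclideanSpace ℝ (Fin N) → ℝ)
    (x : EuclideanSpace ℝ (Fin N)) : ℝ :=
  ∫ y, Kab α β (x - y) * f y

noncomputable def convKL {N : ℕ} (α β : ℝ) (f : EuclideanSpace ℝ (Fin N) → ℝ)
    (x : EuclideanSpace ℝ (Fin N)) : ℝ≥0∞ :=
  ∫⁻ y, ENNReal.ofReal (Kab α β (x - y) * f y)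

/-! On the ball of radius `|x|/2` around `2x`, both `|x - y|` and `|y|` lie between `|x|/3` and
`3|x|`, and by Bernoulli's inequality the same holds for `log (1 + ·)` of them compared with
`log (1 + |x|)`. So on that ball the integrand of `K_{α,β} * f` is at least a constant times
`|x|^{-α-σ} log^{β+κ} (1 + |x|)`, while the ball has volume a constant times `|x|^N`. -/

open Metric

def Comparable (k L a : ℝ) : Prop := L / k ≤ a ∧ a ≤ k * L

namespace Comparable

variable {k L a : ℝ}

lemma pos (h : Comparable k L a) (hk : 0 < k) (hL : 0 < L) : 0 < a :=
  (div_pos hL hk).trans_le h.1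

lemma rpow_lower (h : Comparable k L a) (hk : 0 < k) (hL : 0 < L) (t : ℝ) :
    k ^ (-|t|) * L ^ t ≤ a ^ t := by
  rcases le_or_gt 0 t with ht | ht
  · calc k ^ (-|t|) * L ^ t = (L / k) ^ t := by
          rw [abs_of_nonneg ht, div_rpow hL.le hk.le, rpow_neg hk.le, div_eq_inv_mul]
      _ ≤ a ^ t := rpow_le_rpow (by positivity) h.1 ht
  · calc k ^ (-|t|) * L ^ t = (k * L) ^ t := by
          rw [abs_of_neg ht, neg_neg, mul_rpow hk.le hL.le]
      _ ≤ a ^ t := rpow_le_rpow_of_nonpos (h.pos hk hL) h.2 ht.le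

lemma log_one_add {n : ℕ} (hn : n ≠ 0) (hL : 0 ≤ L) (h : Comparable n L a) :
    Comparable n (log (1 + L)) (log (1 + a)) := by
  have hn' : (0 : ℝ) < n := by positivity
  have ha : 0 ≤ a := (div_nonneg hL hn'.le).trans h.1
  constructor
  · have hB : 1 + L ≤ (1 + L / n) ^ n := by
      simpa [mul_div_cancel₀ L hn'.ne'] using
        one_add_mul_le_pow (a := L / n) (by linarith [div_nonneg hL hn'.le]) n
    rw [div_le_iff₀ hn', mul_comm, ← log_pow]
    calc log (1 + L) ≤ log ((1 + L / n) ^ n) := log_le_log (by linarith) hB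
      _ ≤ log ((1 + a) ^ n) := by gcongr; exact h.1
  · have hB : 1 + n * L ≤ (1 + L) ^ n := one_add_mul_le_pow (by linarith) n
    rw [← log_pow]
    exact log_le_log (by linarith) (by linarith [h.2])

end Comparable

lemma comparable_of_mem_ball_two_smul {E : Type*} [NormedAddCommGroup E] [NormedSpace ℝ E]
    {x y : E} (hy : y ∈ ball ((2 : ℝ) • x) (‖x‖ / 2)) :
    Comparable 3 ‖x‖ ‖x - y‖ ∧ Comparable 3 ‖x‖ ‖y‖ ∧ ‖x‖ ≤ ‖y‖ := by
  rw [mem_ball_iff_norm] at hy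
  have hxy := abs_norm_sub_norm_le (x - y) (-x)
  have hy' := abs_norm_sub_norm_le y ((2 : ℝ) • x)
  rw [show x - y - -x = -(y - (2 : ℝ) • x) by module, norm_neg, norm_neg] at hxy
  rw [norm_smul, Real.norm_two] at hy'
  rw [abs_le] at hxy hy'
  have := norm_nonneg x
  exact ⟨⟨by linarith, by linarith⟩, ⟨by linarith, by linarith⟩, by linarith⟩

lemma rpow_mul_log_rpow_lower {R s : ℝ} (hR : 0 < R) (h : Comparable 3 R s) (a b : ℝ) :
    (3 : ℝ) ^ (-(|a| + |b|)) * (R ^ a * log (1 + R) ^ b) ≤ s ^ a * log (1 + s) ^ b := by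
  have hL : 0 < log (1 + R) := log_pos (by linarith)
  have hlog := h.log_one_add (n := 3) (by norm_num) hR.le
  push_cast at hlog
  calc (3 : ℝ) ^ (-(|a| + |b|)) * (R ^ a * log (1 + R) ^ b)
      = (3 ^ (-|a|) * R ^ a) * (3 ^ (-|b|) * log (1 + R) ^ b) := by
        rw [neg_add, rpow_add (by norm_num)]; ring
    _ ≤ s ^ a * log (1 + s) ^ b :=
        mul_le_mul (h.rpow_lower (by norm_num) hR a) (hlog.rpow_lower (by norm_num) hL b)
          (by positivity) (rpow_nonneg (h.pos (by norm_num) hR).le a)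

lemma Kab_nonneg {N : ℕ} (α β : ℝ) (x : EuclideanSpace ℝ (Fin N)) : 0 ≤ Kab α β x :=
  mul_nonneg (rpow_nonneg (norm_nonneg x) _)
    (rpow_nonneg (log_nonneg (by linarith [norm_nonneg x])) _)

lemma ofReal_mul_volume_le_convKL {N : ℕ} {α β m : ℝ} {f : EuclideanSpace ℝ (Fin N) → ℝ}
    {x : EuclideanSpace ℝ (Fin N)} {s : Set (EuclideanSpace ℝ (Fin N))} (hs : MeasurableSet s)
    (hm : ∀ y ∈ s, m ≤ Kab α β (x - y) * f y) :
    ENNReal.ofReal m * volume s ≤ convKL α β f x :=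
  calc ENNReal.ofReal m * volume s = ∫⁻ _ in s, ENNReal.ofReal m := (setLIntegral_const _ _).symm
    _ ≤ ∫⁻ y in s, ENNReal.ofReal (Kab α β (x - y) * f y) :=
        setLIntegral_mono' hs fun y hy => ENNReal.ofReal_le_ofReal (hm y hy)
    _ ≤ convKL α β f x := setLIntegral_le_lintegral _ _

lemma Kab_mul_lower_of_mem_ball {N : ℕ} {α β σ κ c : ℝ} (hc : 0 ≤ c)
    {f : EuclideanSpace ℝ (Fin N) → ℝ}
    (hlow : ∀ y : EuclideanSpace ℝ (Fin N), 1 ≤ ‖y‖ →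
      c * (‖y‖ ^ (-σ) * log (1 + ‖y‖) ^ κ) ≤ f y)
    {x y : EuclideanSpace ℝ (Fin N)} (hx : 1 ≤ ‖x‖) (hy : y ∈ ball ((2 : ℝ) • x) (‖x‖ / 2)) :
    c * 3 ^ (-(|α| + |β|)) * 3 ^ (-(|σ| + |κ|)) * (‖x‖ ^ (-α - σ) * log (1 + ‖x‖) ^ (β + κ)) ≤
      Kab α β (x - y) * f y := by
  obtain ⟨hxy, hy', hxy'⟩ := comparable_of_mem_ball_two_smul hy
  have hR : 0 < ‖x‖ := by linarith
  have hL : 0 < log (1 + ‖x‖) := log_pos (by linarith)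
  have hK := rpow_mul_log_rpow_lower hR hxy (-α) β
  have hF : c * (3 ^ (-(|-σ| + |κ|)) * (‖x‖ ^ (-σ) * log (1 + ‖x‖) ^ κ)) ≤ f y :=
    (mul_le_mul_of_nonneg_left (rpow_mul_log_rpow_lower hR hy' (-σ) κ) hc).trans
      (hlow y (hx.trans hxy'))
  rw [abs_neg] at hK hF
  calc c * 3 ^ (-(|α| + |β|)) * 3 ^ (-(|σ| + |κ|)) * (‖x‖ ^ (-α - σ) * log (1 + ‖x‖) ^ (β + κ))
      = (3 ^ (-(|α| + |β|)) * (‖x‖ ^ (-α) * log (1 + ‖x‖) ^ β)) *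
          (c * (3 ^ (-(|σ| + |κ|)) * (‖x‖ ^ (-σ) * log (1 + ‖x‖) ^ κ))) := by
        rw [sub_eq_add_neg, rpow_add hR, rpow_add hL]; ring
    _ ≤ Kab α β (x - y) * f y :=
        mul_le_mul hK hF (by positivity) (Kab_nonneg α β (x - y))

theorem stmt5_general (N : ℕ) (α β σ κ c : ℝ) (hc : 0 < c)
    (f : EuclideanSpace ℝ (Fin N) → ℝ)
    (hlow : ∀ x : EuclideanSpace ℝ (Fin N), 1 ≤ ‖x‖ →
      c * (‖x‖ ^ (-σ) * (Real.log (1 + ‖x‖)) ^ κ) ≤ f x) :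
    ∃ C > 0, ∀ x : EuclideanSpace ℝ (Fin N), 1 ≤ ‖x‖ →
      ENNReal.ofReal (C * (‖x‖ ^ ((N : ℝ) - α - σ) * (Real.log (1 + ‖x‖)) ^ (β + κ))) ≤
        convKL α β f x := by
  set v := (volume (ball (0 : EuclideanSpace ℝ (Fin N)) 1)).toReal
  have hv : 0 < v := ENNReal.toReal_pos (measure_ball_pos _ _ one_pos).ne' measure_ball_lt_top.ne
  set c' := c * 3 ^ (-(|α| + |β|)) * 3 ^ (-(|σ| + |κ|))
  have hc' : 0 < c' := by positivity
  refine ⟨c' * (2 ^ N)⁻¹ * v, by positivity, fun x hx => ?_⟩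
  have hR : 0 < ‖x‖ := by linarith
  have hL : 0 < log (1 + ‖x‖) := log_pos (by linarith)
  have hvol : volume (ball ((2 : ℝ) • x) (‖x‖ / 2)) = ENNReal.ofReal ((‖x‖ / 2) ^ N * v) := by
    rw [Measure.addHaar_ball_of_pos _ _ (half_pos hR), finrank_euclideanSpace_fin,
      ENNReal.ofReal_mul (by positivity), ENNReal.ofReal_toReal measure_ball_lt_top.ne]
  have hpow : ‖x‖ ^ ((N : ℝ) - α - σ) = ‖x‖ ^ N * ‖x‖ ^ (-α - σ) := by
    rw [← rpow_natCast, ← rpow_add hR]; ring_nf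
  calc ENNReal.ofReal (c' * (2 ^ N)⁻¹ * v * (‖x‖ ^ ((N : ℝ) - α - σ) * log (1 + ‖x‖) ^ (β + κ)))
      = ENNReal.ofReal (c' * (‖x‖ ^ (-α - σ) * log (1 + ‖x‖) ^ (β + κ))) *
          volume (ball ((2 : ℝ) • x) (‖x‖ / 2)) := by
        rw [hvol, ← ENNReal.ofReal_mul (by positivity), hpow, div_pow]
        ring_nf
    _ ≤ convKL α β f x :=
        ofReal_mul_volume_le_convKL measurableSet_ball fun y hy =>
          Kab_mul_lower_of_mem_ball hc.le hlow hx hy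

theorem stmt5 (N : ℕ) (hN : 1 ≤ N) (α β σ κ c : ℝ) (hα0 : 0 ≤ α) (hαN : α ≤ N)
    (hβ : α - N < β) (hσ : (N : ℝ) - α < σ) (hc : 0 < c)
    (f : EuclideanSpace ℝ (Fin N) → ℝ)
    (hf : LocallyIntegrable f volume) (hf0 : ∀ x, 0 ≤ f x)
    (hlow : ∀ x : EuclideanSpace ℝ (Fin N), 1 ≤ ‖x‖ →
      c * (‖x‖ ^ (-σ) * (Real.log (1 + ‖x‖)) ^ κ) ≤ f x) :
    ∃ C > 0, ∀ x : EuclideanSpace ℝ (Fin N), 1 ≤ ‖x‖ →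
      ENNReal.ofReal (C * (‖x‖ ^ ((N : ℝ) - α - σ) * (Real.log (1 + ‖x‖)) ^ (β + κ))) ≤
        convKL α β f x :=
  stmt5_general N α β σ κ c hc f hlow
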